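/- arXiv:0706.2619 — 2 statements merged into one kernel-verified Lean document; each statement's English description precedes it below -/
import Mathlib

section
/- Let G be a game structure of imperfect information, H = Knw(G), and h : Prefs(G) → Prefs(H) the prefix map. For every ρ_G ∈ Prefs(G), every equivalence-preserving randomized Player-1 strategy α_H in H, and every randomized Player-2 strategy β_H in H, one has Pr_{q0}^{α_H,β_H}(Cone(h(ρ_G))) = Pr_{l0}^{ḡ(α_H),ḡ(β_H)}(Cone(ρ_G)). -/
open scoped ENNReal

/-- A game structure of imperfect information: states `L`, alphabet `A`,
observations `O`.  The observation sets are nonempty and partition `L`. -/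
structure GameStruct (L A O : Type) where
  init : L
  trans : L → A → L → Prop
  total : ∀ l a, ∃ l', trans l a l'
  obsSet : O → Set L
  obs_nonempty : ∀ o, (obsSet o).Nonempty
  obs_cover : ∀ l, ∃ o, l ∈ obsSet o
  obs_disjoint : ∀ o o' l, l ∈ obsSet o → l ∈ obsSet o' → o = o'

/-- A finite alternating sequence `l₀ a₀ l₁ … a_{n-1} l_n`. -/
inductive Pref (L A : Type) : Type where
  | first : L → Pref L A
  | snoc : Pref L A → A → L → Pref L A

namespace Pref

variable {L A L' A' : Type}

def last : Pref L A → L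
  | .first l => l
  | .snoc _ _ l => l

def start : Pref L A → L
  | .first l => l
  | .snoc ρ _ _ => ρ.start

def length : Pref L A → ℕ
  | .first _ => 1
  | .snoc ρ _ _ => ρ.length + 1

/-- All steps of the sequence are transitions of `Δ`. -/
def Steps (Δ : L → A → L → Prop) : Pref L A → Prop
  | .first _ => True
  | .snoc ρ a l => Steps Δ ρ ∧ Δ ρ.last a l

def map (f : L → L') (g : A → A') : Pref L A → Pref L' A'
  | .first l => .first (f l)
  | .snoc ρ a l => .snoc (map f g ρ) (g a) (f l)

end Pref

namespace GameStruct

variable {L A O : Type}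

/-- The unique observation of a state. -/
noncomputable def obsOf (G : GameStruct L A O) (l : L) : O := (G.obs_cover l).choose

/-- The set of prefixes of the game `G`. -/
def Prefs (G : GameStruct L A O) : Set (Pref L A) :=
  {ρ | ρ.start = G.init ∧ Pref.Steps G.trans ρ}

/-- The observation sequence `γ⁻¹(ρ)` of a prefix. -/
noncomputable def obsSeq (G : GameStruct L A O) (ρ : Pref L A) : Pref O A :=
  ρ.map G.obsOf id

def Post (G : GameStruct L A O) (a : A) (s : Set L) : Set L :=
  {l' | ∃ l ∈ s, G.trans l a l'}

/-- The knowledge associated with a finite observation sequence. -/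
noncomputable def K (G : GameStruct L A O) (τ : Pref O A) : Set L :=
  {l | ∃ ρ ∈ G.Prefs, G.obsSeq ρ = τ ∧ ρ.last = l}

/-- Observation-based deterministic Player-1 strategy. -/
def ObsBased (G : GameStruct L A O) (α : Pref L A → A) : Prop :=
  ∀ ρ ∈ G.Prefs, ∀ ρ' ∈ G.Prefs, G.obsSeq ρ = G.obsSeq ρ' → α ρ = α ρ'

/-- Deterministic Player-2 strategy (validity condition). -/
def IsStrat2 (G : GameStruct L A O) (β : Pref L A → A → L) : Prop :=
  ∀ ρ ∈ G.Prefs, ∀ a, G.trans ρ.last a (β ρ a)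

/-- Counting Player-2 strategy. -/
def Counting (G : GameStruct L A O) (β : Pref L A → A → L) : Prop :=
  ∀ ρ ∈ G.Prefs, ∀ ρ' ∈ G.Prefs,
    ρ.length = ρ'.length → ρ.last = ρ'.last → ∀ a, β ρ a = β ρ' a

end GameStruct

/-- The sequence of prefixes resulting from playing `α` against `β` from `s0`. -/
def outPrefGen {S A : Type} (s0 : S) (α : Pref S A → A) (β : Pref S A → A → S) : ℕ → Pref S A
  | 0 => .first s0
  | n + 1 =>
      .snoc (outPrefGen s0 α β n) (α (outPrefGen s0 α β n))
        (β (outPrefGen s0 α β n) (α (outPrefGen s0 α β n)))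

/-- The outcome play (state stream, letter stream) of `α` against `β` from `s0`. -/
def outcomeGen {S A : Type} (s0 : S) (α : Pref S A → A) (β : Pref S A → A → S) :
    (ℕ → S) × (ℕ → A) :=
  (fun n => (outPrefGen s0 α β n).last, fun n => α (outPrefGen s0 α β n))

namespace GameStruct

variable {L A O : Type}

/-- Transition relation `Δᴷ` of the knowledge-based subset construction `Gᴷ`. -/
def transK (G : GameStruct L A O) (s1 : Set L) (a : A) (s2 : Set L) : Prop :=
  (∃ o, s2 = G.Post a s1 ∩ G.obsSet o) ∧ s2.Nonempty

/-- Prefixes of the game `Gᴷ` of perfect information. -/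
def PrefsK (G : GameStruct L A O) : Set (Pref (Set L) A) :=
  {ρ | ρ.start = {G.init} ∧ Pref.Steps G.transK ρ}

/-- A cell `s` is reachable in `Gᴷ`. -/
def ReachableK (G : GameStruct L A O) (s : Set L) : Prop :=
  ∃ ρ ∈ G.PrefsK, ρ.last = s

open Classical in
/-- The unique observation `o` with `s ⊆ γ(o)` (when it exists). -/
noncomputable def obsK (G : GameStruct L A O) (s : Set L) : O :=
  if h : ∃ o, s ⊆ G.obsSet o then h.choose else G.obsOf G.init

/-- Deterministic Player-2 strategy in `Gᴷ` (validity condition). -/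
def IsStrat2K (G : GameStruct L A O) (β : Pref (Set L) A → A → Set L) : Prop :=
  ∀ ρ ∈ G.PrefsK, ∀ a, G.transK ρ.last a (β ρ a)

/-- Player 1 sure wins `G` for objective `φ ⊆ (O × Σ)^ω` with a deterministic
observation-based strategy. -/
def SureWinG (G : GameStruct L A O) (φ : Set ((ℕ → O) × (ℕ → A))) : Prop :=
  ∃ α : Pref L A → A, G.ObsBased α ∧
    ∀ β, G.IsStrat2 β →
      ((fun n => G.obsOf ((outcomeGen G.init α β).1 n)), (outcomeGen G.init α β).2) ∈ φ

/-- Player 1 sure wins `Gᴷ` for objective `φ ⊆ (O × Σ)^ω` with a deterministic strategy. -/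
def SureWinK (G : GameStruct L A O) (φ : Set ((ℕ → O) × (ℕ → A))) : Prop :=
  ∃ α : Pref (Set L) A → A,
    ∀ β, G.IsStrat2K β →
      ((fun n => G.obsK ((outcomeGen ({G.init} : Set L) α β).1 n)),
        (outcomeGen ({G.init} : Set L) α β).2) ∈ φ

end GameStruct

/-- `⌈q⌉`, the set of maximal elements of `q`. -/
def ceil {L : Type} (q : Set (Set L)) : Set (Set L) :=
  {s | s ∈ q ∧ s.Nonempty ∧ ∀ s' ∈ q, ¬ s ⊂ s'}

/-- `q` is an antichain of nonempty subsets of `L`. -/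
def IsAC {L : Type} (q : Set (Set L)) : Prop :=
  (∀ s ∈ q, s.Nonempty) ∧ ∀ s ∈ q, ∀ s' ∈ q, ¬ s ⊂ s'

/-- The type of antichains of nonempty subsets of `L`. -/
def ACL (L : Type) : Type := {q : Set (Set L) // IsAC q}

/-- The order `⊑` on antichains. -/
def acle {L : Type} (q q' : ACL L) : Prop := ∀ s ∈ q.1, ∃ s' ∈ q'.1, s ⊆ s'

theorem ceil_isAC {L : Type} (q : Set (Set L)) : IsAC (ceil q) :=
  ⟨fun _ hs => hs.2.1, fun _ hs s' hs' => hs.2.2 s' hs'.1⟩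

/-- The join `q ⊔ q' = ⌈{s | s ∈ q or s ∈ q'}⌉`. -/
def joinOp {L : Type} (q q' : Set (Set L)) : Set (Set L) := ceil (q ∪ q')

/-- The meet `q ⊓ q' = ⌈{s ∩ s' | s ∈ q and s' ∈ q'}⌉`. -/
def meetOp {L : Type} (q q' : Set (Set L)) : Set (Set L) :=
  ceil {t | ∃ s ∈ q, ∃ s' ∈ q', t = s ∩ s'}

theorem topAC (L : Type) [Nonempty L] : IsAC ({Set.univ} : Set (Set L)) := by
  constructor
  · intro s hs
    rw [Set.mem_singleton_iff] at hs
    subst hs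
    exact Set.univ_nonempty
  · intro s hs s' hs'
    rw [Set.mem_singleton_iff] at hs hs'
    subst hs; subst hs'
    exact fun h => absurd h (lt_irrefl _)

theorem botAC (L : Type) : IsAC (∅ : Set (Set L)) :=
  ⟨fun s hs => absurd hs (Set.notMem_empty s),
   fun s hs => absurd hs (Set.notMem_empty s)⟩

/-- `q ⊆ 𝓛`, i.e. all members of `q` are nonempty. -/
def NESets {L : Type} (q : Set (Set L)) : Prop := ∀ s ∈ q, s.Nonempty

/-- `q` is downward closed (within nonempty sets). -/
def DownClosed {L : Type} (q : Set (Set L)) : Prop :=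
  ∀ s ∈ q, ∀ t, t ⊆ s → t.Nonempty → t ∈ q

namespace GameStruct

variable {L A O : Type}

/-- Controllable predecessor operator on `2^𝓛` (w.r.t. `Gᴷ`). -/
def CPre (G : GameStruct L A O) (q : Set (Set L)) : Set (Set L) :=
  {s | s.Nonempty ∧ ∃ a, ∀ s', G.transK s a s' → s' ∈ q}

end GameStruct

/-- μ-calculus formulas over atomic propositions `O` and variables `V`. -/
inductive MuForm (O V : Type) : Type where
  | atom : O → MuForm O V
  | var : V → MuForm O V
  | or : MuForm O V → MuForm O V → MuForm O V
  | and : MuForm O V → MuForm O V → MuForm O V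
  | pre : MuForm O V → MuForm O V
  | mu : V → MuForm O V → MuForm O V
  | nu : V → MuForm O V → MuForm O V

/-- Semantics of μ-calculus formulas in the lattice of subsets `S = 2^𝓛`. -/
def semS {L A O V : Type} [DecidableEq V] (G : GameStruct L A O) :
    MuForm O V → (V → Set (Set L)) → Set (Set L)
  | .atom o, _ => {s | s.Nonempty ∧ s ⊆ G.obsSet o}
  | .var x, E => E x
  | .or φ ψ, E => semS G φ E ∪ semS G ψ E
  | .and φ ψ, E => semS G φ E ∩ semS G ψ E
  | .pre φ, E => G.CPre (semS G φ E)
  | .mu x φ, E => ⋂₀ {q | NESets q ∧ q = semS G φ (Function.update E x q)}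
  | .nu x φ, E => ⋃₀ {q | NESets q ∧ q = semS G φ (Function.update E x q)}

/-- Greatest lower bound of a family of antichains. -/
def sInfA {L : Type} (Q : Set (Set (Set L))) : Set (Set L) :=
  ceil {s | s.Nonempty ∧ ∀ q ∈ Q, ∃ s' ∈ q, s ⊆ s'}

/-- Least upper bound of a family of antichains. -/
def sSupA {L : Type} (Q : Set (Set (Set L))) : Set (Set L) := ceil (⋃₀ Q)

/-- The antichain controllable predecessor operator `⌈CPre⌉`. -/
def GameStruct.cpreA {L A O : Type} (G : GameStruct L A O) (q : Set (Set L)) : Set (Set L) :=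
  ceil {s | s.Nonempty ∧ ∃ a, ∀ o, ∃ s' ∈ q, G.Post a s ∩ G.obsSet o ⊆ s'}

/-- Semantics of μ-calculus formulas in the lattice of antichains. -/
def semA {L A O V : Type} [DecidableEq V] (G : GameStruct L A O) :
    MuForm O V → (V → Set (Set L)) → Set (Set L)
  | .atom o, _ => {G.obsSet o}
  | .var x, E => E x
  | .or φ ψ, E => joinOp (semA G φ E) (semA G ψ E)
  | .and φ ψ, E => meetOp (semA G φ E) (semA G ψ E)
  | .pre φ, E => G.cpreA (semA G φ E)
  | .mu x φ, E => sInfA {q | IsAC q ∧ q = semA G φ (Function.update E x q)}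
  | .nu x φ, E => sSupA {q | IsAC q ∧ q = semA G φ (Function.update E x q)}

namespace GameStruct

variable {L A O : Type}

/-- Membership in the state set `Q` of `H = Knw(G)`. -/
def inQ (G : GameStruct L A O) (p : Set L × L) : Prop :=
  (∃ o, p.1 ⊆ G.obsSet o) ∧ p.2 ∈ p.1

/-- The transition relation `Δ_H` of `H = Knw(G)` (restricted to `Q`). -/
def transH (G : GameStruct L A O) (p : Set L × L) (a : A) (p' : Set L × L) : Prop :=
  G.inQ p ∧ G.inQ p' ∧ (∃ o, p'.1 = G.Post a p.1 ∩ G.obsSet o) ∧ G.trans p.2 a p'.2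

/-- The map `h : Prefs(G) → Prefs(H)`. -/
noncomputable def hmap (G : GameStruct L A O) : Pref L A → Pref (Set L × L) A
  | .first l => .first (G.K (G.obsSeq (.first l)), l)
  | .snoc ρ a l => .snoc (G.hmap ρ) a (G.K (G.obsSeq (.snoc ρ a l)), l)

/-- Prefixes of `H = Knw(G)`. -/
def PrefsH (G : GameStruct L A O) : Set (Pref (Set L × L) A) :=
  {ρ | ρ.start = ({G.init}, G.init) ∧ Pref.Steps G.transH ρ}

end GameStruct

/-- Equivalence `≈` of prefixes of `H`. -/
def prefEquiv {L A : Type} : Pref (Set L × L) A → Pref (Set L × L) A → Prop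
  | .first q, .first q' => q.1 = q'.1
  | .snoc ρ a q, .snoc ρ' a' q' => prefEquiv ρ ρ' ∧ a = a' ∧ q.1 = q'.1
  | _, _ => False

/-- Randomized Player-1 strategy (each value is a probability distribution). -/
def IsP1Rand {S A : Type} (α : Pref S A → A → ℝ≥0∞) : Prop := ∀ ρ, (∑' a, α ρ a) = 1

namespace GameStruct

variable {L A O : Type}

/-- Observation-based randomized Player-1 strategy in `G`. -/
def ObsBasedR (G : GameStruct L A O) (α : Pref L A → A → ℝ≥0∞) : Prop :=
  ∀ ρ ∈ G.Prefs, ∀ ρ' ∈ G.Prefs, G.obsSeq ρ = G.obsSeq ρ' → α ρ = α ρ'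

/-- Equivalence-preserving randomized Player-1 strategy in `H` (on `Prefs(H)`). -/
def EqPres (G : GameStruct L A O) (α : Pref (Set L × L) A → A → ℝ≥0∞) : Prop :=
  ∀ ρ ∈ G.PrefsH, ∀ ρ' ∈ G.PrefsH, prefEquiv ρ ρ' → α ρ = α ρ'

/-- Equivalence-preserving randomized Player-1 strategy in `H` (on all valid
prefixes of `H`, from arbitrary start states). -/
def EqPres' (G : GameStruct L A O) (α : Pref (Set L × L) A → A → ℝ≥0∞) : Prop :=
  ∀ ρ ρ' : Pref (Set L × L) A, Pref.Steps G.transH ρ → Pref.Steps G.transH ρ' →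
    prefEquiv ρ ρ' → α ρ = α ρ'

/-- Randomized Player-2 strategy in `G` (validity). -/
def IsP2RandG (G : GameStruct L A O) (β : Pref L A → A → L → ℝ≥0∞) : Prop :=
  ∀ ρ a, (∑' l, β ρ a l) = 1 ∧ ∀ l, β ρ a l ≠ 0 → G.trans ρ.last a l

/-- Randomized Player-2 strategy in `H` (validity). -/
def IsP2RandH (G : GameStruct L A O)
    (β : Pref (Set L × L) A → A → (Set L × L) → ℝ≥0∞) : Prop :=
  ∀ ρ a, G.inQ (Pref.last ρ) →
    (∑' q, β ρ a q) = 1 ∧ ∀ q, β ρ a q ≠ 0 → G.transH ρ.last a q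

end GameStruct

/-- `ḡ` on Player-1 strategies. -/
noncomputable def gbar1 {L A O : Type} (G : GameStruct L A O)
    (αH : Pref (Set L × L) A → A → ℝ≥0∞) : Pref L A → A → ℝ≥0∞ :=
  fun ρ => αH (G.hmap ρ)

/-- The projection `h⁻¹ : Prefs(H) → Prefs(G)`. -/
def projH {L A : Type} : Pref (Set L × L) A → Pref L A := Pref.map Prod.snd id

/-- `h̄` on Player-1 strategies. -/
def hbar1 {L A : Type} (αG : Pref L A → A → ℝ≥0∞) :
    Pref (Set L × L) A → A → ℝ≥0∞ := fun ρ => αG (projH ρ)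

/-- `ḡ` on Player-2 strategies: `ḡ(β_H)(ρ,a)(l') = β_H(h(ρ),a)(s',l')` for the unique
`s'` with `((K(γ⁻¹(ρ)), Last ρ), a, (s',l')) ∈ Δ_H`, and `0` if there is none. -/
noncomputable def GameStruct.gbar2 {L A O : Type} (G : GameStruct L A O)
    (βH : Pref (Set L × L) A → A → (Set L × L) → ℝ≥0∞) : Pref L A → A → L → ℝ≥0∞ :=
  fun ρ a l' =>
    ∑' s' : {s' : Set L // G.transH (G.K (G.obsSeq ρ), ρ.last) a (s', l')},
      βH (G.hmap ρ) a (s'.1, l')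

open Classical in
/-- `h̄` on Player-2 strategies. -/
noncomputable def GameStruct.hbar2 {L A O : Type} (G : GameStruct L A O)
    (βG : Pref L A → A → L → ℝ≥0∞) :
    Pref (Set L × L) A → A → (Set L × L) → ℝ≥0∞ :=
  fun ρ a q => if G.transH ρ.last a q then βG (projH ρ) a q.2 else 0

open Classical in
/-- The probability of the cone of a prefix under a pair of randomized
strategies, starting from `s0`. -/
noncomputable def conePr {S A : Type} (s0 : S)
    (α : Pref S A → A → ℝ≥0∞) (β : Pref S A → A → S → ℝ≥0∞) : Pref S A → ℝ≥0∞
  | .first s => if s = s0 then 1 else 0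
  | .snoc ρ a s => conePr s0 α β ρ * α ρ a * β ρ a s

namespace GameStruct

variable {L A O : Type}

lemma mem_obsOf (G : GameStruct L A O) (l : L) : l ∈ G.obsSet (G.obsOf l) :=
  (G.obs_cover l).choose_spec

lemma obsOf_eq (G : GameStruct L A O) {l : L} {o : O} (h : l ∈ G.obsSet o) :
    G.obsOf l = o := G.obs_disjoint _ _ l (G.mem_obsOf l) h

lemma last_map {L' A' : Type} (f : L → L') (g : A → A') (ρ : Pref L A) :
    (ρ.map f g).last = f ρ.last := by cases ρ <;> rfl

lemma obsSeq_last (G : GameStruct L A O) (ρ : Pref L A) :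
    (G.obsSeq ρ).last = G.obsOf ρ.last := last_map _ _ _

lemma K_sub (G : GameStruct L A O) (τ : Pref O A) : G.K τ ⊆ G.obsSet τ.last := by
  rintro l ⟨ρ, _, hobs, hlast⟩
  subst hlast
  rw [← hobs, obsSeq_last]
  exact G.mem_obsOf _

lemma last_mem_K (G : GameStruct L A O) {ρ : Pref L A} (h : ρ ∈ G.Prefs) :
    ρ.last ∈ G.K (G.obsSeq ρ) := ⟨ρ, h, rfl, rfl⟩

lemma K_first (G : GameStruct L A O) :
    G.K (G.obsSeq (.first G.init)) = {G.init} := by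
  ext l
  constructor
  · rintro ⟨ρ, ⟨hstart, _⟩, hobs, hlast⟩
    cases ρ with
    | first l' =>
      subst hlast
      simpa [Pref.start, Pref.last] using hstart
    | snoc ρ a l' => exact absurd hobs (by simp [obsSeq, Pref.map])
  · rintro rfl
    exact G.last_mem_K ⟨rfl, trivial⟩

lemma K_update (G : GameStruct L A O) {ρ : Pref L A} (hρ : ρ ∈ G.Prefs)
    {a : A} {l : L} (hl : G.trans ρ.last a l) :
    G.K (G.obsSeq (.snoc ρ a l))
      = G.Post a (G.K (G.obsSeq ρ)) ∩ G.obsSet (G.obsOf l) := by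
  ext l''
  constructor
  · rintro ⟨ρ', hρ', hobs, hlast⟩
    cases ρ' with
    | first _ => exact absurd hobs (by simp [obsSeq, Pref.map])
    | snoc ρ'' a' l''' =>
      have hobs' : Pref.snoc (G.obsSeq ρ'') a' (G.obsOf l''')
          = Pref.snoc (G.obsSeq ρ) a (G.obsOf l) := hobs
      injection hobs' with h1 h2 h3
      subst h2
      have hl3 : l''' = l'' := hlast
      subst hl3
      refine ⟨⟨ρ''.last, ?_, hρ'.2.2⟩, ?_⟩
      · rw [← h1]; exact G.last_mem_K ⟨hρ'.1, hρ'.2.1⟩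
      · rw [← h3]; exact G.mem_obsOf _
  · rintro ⟨⟨m, hm, hmt⟩, hobs⟩
    obtain ⟨ρ₂, hρ₂, hob2, hlast2⟩ := hm
    refine ⟨.snoc ρ₂ a l'', ⟨hρ₂.1, hρ₂.2, hlast2 ▸ hmt⟩, ?_, rfl⟩
    show Pref.snoc (G.obsSeq ρ₂) a (G.obsOf l'')
        = Pref.snoc (G.obsSeq ρ) a (G.obsOf l)
    rw [hob2, G.obsOf_eq hobs]

lemma transH_K (G : GameStruct L A O) {ρ : Pref L A} (hρ : ρ ∈ G.Prefs)
    {a : A} {l : L} (hl : G.trans ρ.last a l) :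
    G.transH (G.K (G.obsSeq ρ), ρ.last) a (G.K (G.obsSeq (.snoc ρ a l)), l) := by
  have hsn : (Pref.snoc ρ a l) ∈ G.Prefs := ⟨hρ.1, hρ.2, hl⟩
  refine ⟨⟨⟨_, G.K_sub _⟩, G.last_mem_K hρ⟩,
    ⟨⟨_, G.K_sub _⟩, G.last_mem_K hsn⟩, ⟨G.obsOf l, G.K_update hρ hl⟩, hl⟩

lemma transH_K_unique (G : GameStruct L A O) {ρ : Pref L A} (hρ : ρ ∈ G.Prefs)
    {a : A} {l : L} {s' : Set L}
    (h : G.transH (G.K (G.obsSeq ρ), ρ.last) a (s', l)) :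
    s' = G.K (G.obsSeq (.snoc ρ a l)) := by
  obtain ⟨_, ⟨⟨o', hso'⟩, hls'⟩, ⟨o, ho⟩, htr⟩ := h
  have ho' : s' = G.Post a (G.K (G.obsSeq ρ)) ∩ G.obsSet o := ho
  have hoo : G.obsOf l = o := G.obsOf_eq (by rw [ho'] at hls'; exact hls'.2)
  rw [show (G.K (G.obsSeq (Pref.snoc ρ a l)))
      = G.Post a (G.K (G.obsSeq ρ)) ∩ G.obsSet (G.obsOf l) from G.K_update hρ htr, hoo]
  exact ho'

end GameStruct

section Theorems

variable {L A O V : Type}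

theorem stmt_17 [Finite L] [Finite A] [Finite O] (G : GameStruct L A O)
    (ρG : Pref L A) (hρ : ρG ∈ G.Prefs)
    (αH : Pref (Set L × L) A → A → ℝ≥0∞)
    (hα1 : IsP1Rand αH) (hα2 : G.EqPres αH)
    (βH : Pref (Set L × L) A → A → (Set L × L) → ℝ≥0∞) (hβ : G.IsP2RandH βH) :
    conePr (({G.init}, G.init) : Set L × L) αH βH (G.hmap ρG)
      = conePr G.init (gbar1 G αH) (G.gbar2 βH) ρG := by
  induction ρG with
  | first l =>
    have : l = G.init := hρ.1
    subst this
    show conePr _ αH βH (.first (G.K (G.obsSeq (.first G.init)), G.init)) = _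
    simp [conePr, G.K_first]
  | snoc ρ a l ih =>
    have hρ' : ρ ∈ G.Prefs := ⟨hρ.1, hρ.2.1⟩
    have htr : G.trans ρ.last a l := hρ.2.2
    have ihv := ih hρ'
    show conePr _ αH βH (G.hmap ρ) * αH (G.hmap ρ) a
        * βH (G.hmap ρ) a (G.K (G.obsSeq (.snoc ρ a l)), l) = _
    rw [ihv]
    show _ = conePr G.init (gbar1 G αH) (G.gbar2 βH) ρ * αH (G.hmap ρ) a
        * ∑' s' : {s' : Set L // G.transH (G.K (G.obsSeq ρ), ρ.last) a (s', l)},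
            βH (G.hmap ρ) a (s'.1, l)
    congr 1
    rw [tsum_eq_single
      (⟨G.K (G.obsSeq (.snoc ρ a l)), G.transH_K hρ' htr⟩ :
        {s' : Set L // G.transH (G.K (G.obsSeq ρ), ρ.last) a (s', l)})
      (fun b' hne => absurd (Subtype.ext (G.transH_K_unique hρ' b'.2)) hne)]

end Theorems
end

section
/- Let G be a game structure of imperfect information and H = Knw(G). Let α_H be an equivalence-preserving randomized Player-1 strategy in H, let ρ be a prefix of H starting at a state q ∈ Q, and suppose there exists a randomized Player-2 strategy β_H in H with Pr_q^{α_H,β_H}(Cone(ρ)) > 0. Then for every prefix ρ' of H with ρ ≈ ρ', there exist a randomized Player-2 strategy β'_H and a state q' ∈ [q]_≈ such that Pr_{q'}^{α_H,β'_H}(Cone(ρ')) > 0. -/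
open scoped ENNReal

section Theorems

variable {L A O V : Type}

/-! ### Auxiliary material for `stmt_19` -/

/-- `σ` is a prefix of `τ`. -/
def isPrefOf {S B : Type} : Pref S B → Pref S B → Prop
  | σ, .first l => σ = .first l
  | σ, .snoc τ a l => σ = .snoc τ a l ∨ isPrefOf σ τ

theorem isPrefOf_refl {S B : Type} (σ : Pref S B) : isPrefOf σ σ := by
  cases σ with
  | first l => rfl
  | snoc τ a l => exact Or.inl rfl

theorem isPrefOf_length {S B : Type} {σ τ : Pref S B} (h : isPrefOf σ τ) :
    σ.length ≤ τ.length := by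
  induction τ with
  | first l => cases h; exact le_refl _
  | snoc τ a l ih =>
    rcases h with h | h
    · subst h; exact le_refl _
    · exact (ih h).trans (Nat.le_succ _)

theorem isPrefOf_start {S B : Type} {σ τ : Pref S B} (h : isPrefOf σ τ) :
    σ.start = τ.start := by
  induction τ with
  | first l => cases h; rfl
  | snoc τ a l ih =>
    rcases h with h | h
    · subst h; rfl
    · exact ih h

theorem isPrefOf_steps {S B : Type} {Δ : S → B → S → Prop} {σ τ : Pref S B}
    (hτ : Pref.Steps Δ τ) (h : isPrefOf σ τ) : Pref.Steps Δ σ := by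
  induction τ with
  | first l => cases h; exact hτ
  | snoc τ a l ih =>
    rcases h with h | h
    · subst h; exact hτ
    · exact ih hτ.1 h

theorem isPrefOf_of_snoc {S B : Type} {σ τ : Pref S B} {a : B} {p : S}
    (h : isPrefOf (.snoc σ a p) τ) : isPrefOf σ τ := by
  induction τ with
  | first l => cases h
  | snoc τ b l ih =>
    rcases h with h | h
    · cases h; exact Or.inr (isPrefOf_refl σ)
    · exact Or.inr (ih h)

theorem isPrefOf_unique {S B : Type} {τ : Pref S B} :
    ∀ {σ σ' : Pref S B}, isPrefOf σ τ → isPrefOf σ' τ →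
      σ.length = σ'.length → σ = σ' := by
  induction τ with
  | first l => intro σ σ' h h' _; cases h; cases h'; rfl
  | snoc τ a l ih =>
    intro σ σ' h h' hlen
    rcases h with h | h <;> rcases h' with h' | h'
    · subst h; subst h'; rfl
    · exfalso; subst h
      have := isPrefOf_length h'
      simp [Pref.length] at hlen
      omega
    · exfalso; subst h'
      have := isPrefOf_length h
      simp [Pref.length] at hlen
      omega
    · exact ih h h' hlen

theorem prefEquiv_start_fst {S B : Type} {ρ ρ' : Pref (Set S × S) B}
    (h : prefEquiv ρ ρ') : ρ.start.1 = ρ'.start.1 := by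
  induction ρ generalizing ρ' with
  | first p => cases ρ' with
    | first p' => exact h
    | snoc _ _ _ => exact absurd h not_false
  | snoc ρ a p ih => cases ρ' with
    | first p' => exact absurd h not_false
    | snoc ρ' a' p' =>
      show ρ.start.1 = ρ'.start.1
      exact ih h.1

theorem prefEquiv_symm {S B : Type} {ρ ρ' : Pref (Set S × S) B}
    (h : prefEquiv ρ ρ') : prefEquiv ρ' ρ := by
  induction ρ generalizing ρ' with
  | first p => cases ρ' with
    | first p' => exact h.symm
    | snoc _ _ _ => exact absurd h not_false
  | snoc ρ a p ih => cases ρ' with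
    | first p' => exact absurd h not_false
    | snoc ρ' a' p' =>
      obtain ⟨hh1, hh2, hh3⟩ := h
      exact ⟨ih hh1, hh2.symm, hh3.symm⟩

theorem GameStruct.mem_obsOf_s19 {L A O : Type} (G : GameStruct L A O) (l : L) :
    l ∈ G.obsSet (G.obsOf l) := (G.obs_cover l).choose_spec

theorem GameStruct.succ_exists {L A O : Type} (G : GameStruct L A O)
    {q0 : Set L × L} (h : G.inQ q0) (a : A) : ∃ p, G.transH q0 a p := by
  obtain ⟨l', hl'⟩ := G.total q0.2 a
  exact ⟨(G.Post a q0.1 ∩ G.obsSet (G.obsOf l'), l'), h,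
    ⟨⟨G.obsOf l', Set.inter_subset_right⟩, ⟨⟨q0.2, h.2, hl'⟩, G.mem_obsOf_s19 l'⟩⟩,
    ⟨G.obsOf l', rfl⟩, hl'⟩

open Classical in
/-- The "follow `ρ'₀`" choice of a successor. -/
noncomputable def nextAlong {L A O : Type} (G : GameStruct L A O)
    (ρ'₀ : Pref (Set L × L) A) (σ : Pref (Set L × L) A) (a : A) : Set L × L :=
  if h : ∃ p, isPrefOf (.snoc σ a p) ρ'₀ ∧ G.transH σ.last a p then h.choose
  else if h2 : ∃ p, G.transH σ.last a p then h2.choose else σ.last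

open Classical in
/-- The deterministic Player-2 strategy following `ρ'₀`. -/
noncomputable def followStrat {L A O : Type} (G : GameStruct L A O)
    (ρ'₀ : Pref (Set L × L) A) :
    Pref (Set L × L) A → A → (Set L × L) → ℝ≥0∞ :=
  fun σ a p => if p = nextAlong G ρ'₀ σ a then 1 else 0

theorem followStrat_isP2 {L A O : Type} (G : GameStruct L A O)
    (ρ'₀ : Pref (Set L × L) A) : G.IsP2RandH (followStrat G ρ'₀) := by
  intro σ a hlast
  constructor
  · simp [followStrat, tsum_ite_eq]
  · intro p hp
    simp only [followStrat, ne_eq, ite_eq_right_iff, one_ne_zero, imp_false,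
      not_not] at hp
    subst hp
    unfold nextAlong
    split
    · next h => exact h.choose_spec.2
    · rw [dif_pos (G.succ_exists hlast a)]
      exact (G.succ_exists hlast a).choose_spec

theorem nextAlong_eq {L A O : Type} (G : GameStruct L A O)
    {ρ'₀ : Pref (Set L × L) A} {σ : Pref (Set L × L) A} {a : A} {p : Set L × L}
    (hpre : isPrefOf (.snoc σ a p) ρ'₀) (htr : G.transH σ.last a p) :
    nextAlong G ρ'₀ σ a = p := by
  unfold nextAlong
  rw [dif_pos ⟨p, hpre, htr⟩]
  have hspec := (⟨p, hpre, htr⟩ : ∃ p, isPrefOf (.snoc σ a p) ρ'₀ ∧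
    G.transH σ.last a p).choose_spec
  have := isPrefOf_unique hspec.1 hpre rfl
  exact (Pref.snoc.inj this).2.2

theorem key_pos {L A O : Type} (G : GameStruct L A O)
    (αH : Pref (Set L × L) A → A → ℝ≥0∞) (hα2 : G.EqPres' αH)
    (βH : Pref (Set L × L) A → A → (Set L × L) → ℝ≥0∞)
    (q : Set L × L) (ρ'₀ : Pref (Set L × L) A) (hst₀ : Pref.Steps G.transH ρ'₀) :
    ∀ ρ ρ' : Pref (Set L × L) A, Pref.Steps G.transH ρ → Pref.Steps G.transH ρ' →
      prefEquiv ρ ρ' → conePr q αH βH ρ ≠ 0 → isPrefOf ρ' ρ'₀ →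
      conePr ρ'₀.start αH (followStrat G ρ'₀) ρ' ≠ 0 := by
  intro ρ
  induction ρ with
  | first p =>
    intro ρ' _ _ heq hc hpre
    cases ρ' with
    | first p' =>
      have : (Pref.first p' : Pref (Set L × L) A).start = ρ'₀.start :=
        isPrefOf_start hpre
      simp only [Pref.start] at this
      simp [conePr, this]
    | snoc _ _ _ => exact absurd heq not_false
  | snoc ρ a p ih =>
    intro ρ' hρ hρ' heq hc hpre
    cases ρ' with
    | first _ => exact absurd heq not_false
    | snoc ρ'' a' p' =>
      obtain ⟨heq1, rfl, hfst⟩ := heq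
      simp only [conePr, mul_ne_zero_iff] at hc ⊢
      obtain ⟨⟨hc1, hc2⟩, _⟩ := hc
      refine ⟨⟨ih ρ'' hρ.1 hρ'.1 heq1 hc1 (isPrefOf_of_snoc hpre), ?_⟩, ?_⟩
      · rwa [hα2 ρ'' ρ hρ'.1 hρ.1 (prefEquiv_symm heq1)]
      · rw [followStrat, nextAlong_eq G hpre hρ'.2, if_pos rfl]
        exact one_ne_zero

theorem stmt_19 [Finite L] [Finite A] [Finite O] (G : GameStruct L A O)
    (q : Set L × L) (hq : G.inQ q)
    (ρ : Pref (Set L × L) A) (h1 : ρ.start = q) (h2 : Pref.Steps G.transH ρ)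
    (αH : Pref (Set L × L) A → A → ℝ≥0∞)
    (hα1 : IsP1Rand αH) (hα2 : G.EqPres' αH)
    (βH : Pref (Set L × L) A → A → (Set L × L) → ℝ≥0∞) (hβ : G.IsP2RandH βH)
    (hpos : 0 < conePr q αH βH ρ)
    (ρ' : Pref (Set L × L) A) (h1' : G.inQ ρ'.start) (h2' : Pref.Steps G.transH ρ')
    (heq : prefEquiv ρ ρ') :
    ∃ βH', G.IsP2RandH βH' ∧ ∃ q' : Set L × L, G.inQ q' ∧ q'.1 = q.1 ∧
      0 < conePr q' αH βH' ρ' := by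
  refine ⟨followStrat G ρ', followStrat_isP2 G ρ', ρ'.start, h1', ?_, ?_⟩
  · rw [← h1]; exact (prefEquiv_start_fst heq).symm
  · rw [pos_iff_ne_zero]
    exact key_pos G αH hα2 βH q ρ' h2' ρ ρ' h2 h2' heq
      (pos_iff_ne_zero.mp hpos) (isPrefOf_refl ρ')

end Theorems
end
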